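/- arXiv:2311.07124 — 2 statements merged into one kernel-verified Lean document; each statement's English description precedes it below -/
import Mathlib

section
/- Let L be a κ×κ column-stochastic primitive matrix and M = L - I_κ. Then every column of the adjugate matrix M* is nonzero. -/
/-!
If column `j` of `adj M` vanishes, then summing it shows that `M` with row `j` replaced by the
all-ones row is singular (Cramer's rule). A nonzero kernel vector `v` of that matrix satisfies
`M v = 0` off row `j` and `∑ v = 0`; since the columns of `M` sum to zero, also `(M v)_j = 0`.
So `v` is a fixed vector of the positive column-stochastic matrix `A = L ^ s` with zero sum.
But `|v| - v` is then a nonnegative fixed vector of `A` (the triangle inequality `|v| ≤ A |v|`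
is an equality because `A` preserves sums), and positivity of `A` forces it to vanish identically
or nowhere: `v` has constant sign, hence `v = 0`.
-/

open Matrix Finset

namespace Matrix

variable {n R : Type*} [Fintype n]

section DecidableEq

variable [DecidableEq n]

theorem sum_adjugate_apply [CommRing R] (A : Matrix n n R) (j : n) :
    ∑ i, A.adjugate i j = (A.updateRow j 1).det := by
  simp only [adjugate_def, of_apply]
  rw [← Finset.sum_apply, sum_cramer, univ_sum_single, cramer_transpose_apply]
  rfl

theorem mulVec_eq_zero_of_updateRow_one_mulVec_eq_zero [CommRing R] {A : Matrix n n R}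
    (hA : 1 ᵥ* A = 0) {j : n} {v : n → R} (hv : A.updateRow j 1 *ᵥ v = 0) :
    A *ᵥ v = 0 ∧ ∑ i, v i = 0 := by
  have hrow (i : n) (hi : i ≠ j) : (A *ᵥ v) i = 0 := by
    simpa [mulVec, updateRow_ne hi] using congrFun hv i
  have htotal : ∑ i, (A *ᵥ v) i = 0 := by
    rw [← one_dotProduct, dotProduct_mulVec, hA, zero_dotProduct]
  refine ⟨funext fun i => ?_, by simpa [mulVec, dotProduct] using congrFun hv j⟩
  rcases eq_or_ne i j with rfl | hi
  · rwa [sum_eq_single_of_mem i (mem_univ i) fun k _ hk => hrow k hk] at htotal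
  · exact hrow i hi

theorem mulVec_pow_eq_self [Semiring R] {A : Matrix n n R} {v : n → R} (h : A *ᵥ v = v)
    (k : ℕ) :
    A ^ k *ᵥ v = v := by
  induction k with
  | zero => simp
  | succ k ih => rw [pow_succ', ← mulVec_mulVec, ih, h]

theorem vecMul_pow_eq_self [Semiring R] {A : Matrix n n R} {v : n → R} (h : v ᵥ* A = v)
    (k : ℕ) :
    v ᵥ* A ^ k = v := by
  induction k with
  | zero => simp
  | succ k ih => rw [pow_succ, ← vecMul_vecMul, ih, h]

end DecidableEq

section Ordered

variable [CommRing R] [LinearOrder R] [IsStrictOrderedRing R]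

theorem abs_mulVec_le {A : Matrix n n R} (hA : ∀ i j, 0 ≤ A i j) (v : n → R) :
    |A *ᵥ v| ≤ A *ᵥ |v| := fun i =>
  (abs_sum_le_sum_abs _ _).trans_eq <| by
    simp [mulVec, dotProduct, abs_mul, abs_of_nonneg (hA i _)]

theorem mulVec_eq_self_of_le_mulVec {A : Matrix n n R} (hA : 1 ᵥ* A = 1) {w : n → R}
    (hw : w ≤ A *ᵥ w) : A *ᵥ w = w := by
  have hsum : ∑ i, w i = ∑ i, (A *ᵥ w) i := by
    rw [← one_dotProduct, ← one_dotProduct, dotProduct_mulVec, hA]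
  exact funext fun i => ((sum_eq_sum_iff_of_le fun i _ => hw i).1 hsum i (mem_univ i)).symm

theorem nonneg_of_mulVec_eq_self {A : Matrix n n R} (hpos : ∀ i j, 0 < A i j)
    (hA : 1 ᵥ* A = 1) {v : n → R} (hv : A *ᵥ v = v) {i : n} (hi : 0 ≤ v i) : 0 ≤ v := by
  set u := |v| - v
  have hu : A *ᵥ u = u := by
    have habs : A *ᵥ |v| = |v| := mulVec_eq_self_of_le_mulVec hA <|
      calc |v| = |A *ᵥ v| := by rw [hv]
        _ ≤ A *ᵥ |v| := abs_mulVec_le (fun i j => (hpos i j).le) v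
    rw [mulVec_sub, habs, hv]
  have hui : ∑ k, A i k * u k = 0 := by
    simpa [u, mulVec, dotProduct, abs_of_nonneg hi] using congrFun hu i
  intro k
  have := (sum_eq_zero_iff_of_nonneg fun k _ => mul_nonneg (hpos i k).le
    (sub_nonneg.2 (le_abs_self (v k)))).1 hui k (mem_univ k)
  simpa [u, (hpos i k).ne', sub_eq_zero] using this

theorem eq_zero_of_mulVec_eq_self_of_sum_eq_zero {A : Matrix n n R} (hpos : ∀ i j, 0 < A i j)
    (hA : 1 ᵥ* A = 1) {v : n → R} (hv : A *ᵥ v = v) (hsum : ∑ i, v i = 0) : v = 0 := by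
  funext k
  rcases le_total 0 (v k) with hk | hk
  · exact (sum_eq_zero_iff_of_nonneg fun i _ => nonneg_of_mulVec_eq_self hpos hA hv hk i).1
      hsum k (mem_univ k)
  · have hv' : A *ᵥ -v = -v := by rw [mulVec_neg, hv]
    have := (sum_eq_zero_iff_of_nonneg fun i _ =>
      nonneg_of_mulVec_eq_self hpos hA hv' (neg_nonneg.2 hk) i).1 (by simp [hsum]) k (mem_univ k)
    simpa using this

end Ordered

end Matrix

theorem stmt_2_general (κ : ℕ) (L : Matrix (Fin κ) (Fin κ) ℝ)
    (hcol : ∀ j, ∑ i, L i j = 1)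
    (hprim : ∃ s : ℕ, 0 < s ∧ ∀ i j, 0 < (L ^ s) i j) :
    ∀ j : Fin κ, (fun i => (L - 1).adjugate i j) ≠ 0 := by
  intro j hadj
  have hL : 1 ᵥ* L = 1 := funext fun k => by simpa [vecMul, dotProduct] using hcol k
  have hM : 1 ᵥ* (L - 1) = 0 := by rw [vecMul_sub, hL, vecMul_one, sub_self]
  have hdet : ((L - 1).updateRow j 1).det = 0 := by
    rw [← sum_adjugate_apply]
    exact sum_eq_zero fun i _ => congrFun hadj i
  obtain ⟨v, hv0, hNv⟩ := exists_mulVec_eq_zero_iff.2 hdet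
  obtain ⟨hMv, hsum⟩ := mulVec_eq_zero_of_updateRow_one_mulVec_eq_zero hM hNv
  have hLv : L *ᵥ v = v := by rwa [sub_mulVec, one_mulVec, sub_eq_zero] at hMv
  obtain ⟨s, -, hpos⟩ := hprim
  exact hv0 <| eq_zero_of_mulVec_eq_self_of_sum_eq_zero hpos (vecMul_pow_eq_self hL s)
    (mulVec_pow_eq_self hLv s) hsum

/-- For a primitive column-stochastic matrix `L`, every column of the adjugate of
`M = L - I` is nonzero. -/
theorem stmt_2 (κ : ℕ) (hκ : 0 < κ) (L : Matrix (Fin κ) (Fin κ) ℝ)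
    (hnn : ∀ i j, 0 ≤ L i j) (hcol : ∀ j, ∑ i, L i j = 1)
    (hprim : ∃ s : ℕ, 0 < s ∧ ∀ i j, 0 < (L ^ s) i j) :
    ∀ j : Fin κ, (fun i => (L - 1).adjugate i j) ≠ 0 :=
  stmt_2_general κ L hcol hprim
end

section
/- Let L be a κ×κ column-stochastic primitive matrix, M = L - I_κ, M* its adjugate, and u a nonzero vector with Lu = u. Then every column of M* is a scalar multiple of u; moreover for each column index j there exists μ_j ≠ 0 with Col_j(M*) = μ_j · u. -/
open Matrix Finset

-- column sums of powers
lemma colsum_pow {κ : ℕ} (L : Matrix (Fin κ) (Fin κ) ℝ)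
    (hcol : ∀ j, ∑ i, L i j = 1) : ∀ s : ℕ, 0 < s → ∀ j, ∑ i, (L ^ s) i j = 1 := by
  intro s
  induction s with
  | zero => intro h; exact absurd h (lt_irrefl 0)
  | succ n ih =>
      intro _ j
      rcases Nat.eq_zero_or_pos n with h0 | hp
      · subst h0; simpa using hcol j
      · rw [pow_succ]
        simp only [Matrix.mul_apply]
        rw [Finset.sum_comm]
        have : ∀ k ∈ Finset.univ, ∑ i, (L ^ n) i k * L k j = L k j := by
          intro k _
          rw [← Finset.sum_mul, ih hp k, one_mul]
        rw [Finset.sum_congr rfl this, hcol j]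

lemma fix_pow {κ : ℕ} (L : Matrix (Fin κ) (Fin κ) ℝ) (v : Fin κ → ℝ)
    (hfix : L.mulVec v = v) (s : ℕ) : (L ^ s).mulVec v = v := by
  induction s with
  | zero => simp
  | succ n ih => rw [pow_succ, ← Matrix.mulVec_mulVec, hfix, ih]

-- key Perron lemma: fixed vectors of a positive column-stochastic matrix have no zero entries
lemma key {κ : ℕ} (A : Matrix (Fin κ) (Fin κ) ℝ)
    (hpos : ∀ i j, 0 < A i j) (hcol : ∀ j, ∑ i, A i j = 1)
    (w : Fin κ → ℝ) (hw : A.mulVec w = w) {j₀ : Fin κ} (h0 : w j₀ ≠ 0) :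
    ∀ i, w i ≠ 0 := by
  set b : Fin κ → ℝ := fun i => |w i| with hb
  have hle : ∀ i, b i ≤ (A.mulVec b) i := by
    intro i
    have h1 : w i = ∑ k, A i k * w k := by
      conv_lhs => rw [← hw]
      rfl
    calc b i = |∑ k, A i k * w k| := by rw [hb]; simp [← h1]
      _ ≤ ∑ k, |A i k * w k| := Finset.abs_sum_le_sum_abs _ _
      _ = ∑ k, A i k * b k := by
          refine Finset.sum_congr rfl fun k _ => ?_
          rw [abs_mul, abs_of_pos (hpos i k)]
      _ = (A.mulVec b) i := rfl
  have hsum : ∑ i, ((A.mulVec b) i - b i) = 0 := by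
    have h1 : ∑ i, (A.mulVec b) i = ∑ k, b k := by
      simp only [Matrix.mulVec, dotProduct]
      rw [Finset.sum_comm]
      refine Finset.sum_congr rfl fun k _ => ?_
      rw [← Finset.sum_mul, hcol k, one_mul]
    rw [Finset.sum_sub_distrib, h1, sub_self]
  have heq : ∀ i, (A.mulVec b) i = b i := by
    intro i
    have hg : ∀ i ∈ (Finset.univ : Finset (Fin κ)), (0:ℝ) ≤ (A.mulVec b) i - b i :=
      fun i _ => sub_nonneg.mpr (hle i)
    have h5 := (Finset.sum_eq_zero_iff_of_nonneg hg).mp hsum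
    have := h5 i (Finset.mem_univ i)
    linarith
  intro i
  have hbi : 0 < b i := by
    have h2 : A i j₀ * b j₀ ≤ ∑ k, A i k * b k := by
      refine Finset.single_le_sum (f := fun k => A i k * b k) (fun k _ => ?_) (Finset.mem_univ j₀)
      exact mul_nonneg (hpos i k).le (abs_nonneg _)
    have h3 : 0 < A i j₀ * b j₀ :=
      mul_pos (hpos i j₀) (abs_pos.mpr h0)
    have h4 : (A.mulVec b) i = ∑ k, A i k * b k := rfl
    rw [heq i] at h4
    linarith
  exact fun hzero => by rw [hb] at hbi; simp [hzero] at hbi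

/-- For a primitive column-stochastic matrix `L` with `M = L - I` and a nonzero
vector `u` with `Lu = u`, every column of the adjugate `M*` is a nonzero scalar
multiple of `u`. -/
theorem stmt_4 (κ : ℕ) (hκ : 0 < κ) (L : Matrix (Fin κ) (Fin κ) ℝ)
    (hnn : ∀ i j, 0 ≤ L i j) (hcol : ∀ j, ∑ i, L i j = 1)
    (hprim : ∃ s : ℕ, 0 < s ∧ ∀ i j, 0 < (L ^ s) i j)
    (u : Fin κ → ℝ) (hu : u ≠ 0) (hfix : L.mulVec u = u) :
    ∀ j : Fin κ, ∃ μ : ℝ, μ ≠ 0 ∧ (fun i => (L - 1).adjugate i j) = μ • u := by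
  obtain ⟨s, hs, hApos⟩ := hprim
  set M : Matrix (Fin κ) (Fin κ) ℝ := L - 1 with hM
  set A : Matrix (Fin κ) (Fin κ) ℝ := L ^ s with hA
  have hAcol : ∀ j, ∑ i, A i j = 1 := colsum_pow L hcol s hs
  have hL1 : ∀ v : Fin κ → ℝ, L.mulVec v = v ↔ M.mulVec v = 0 := by
    intro v
    rw [hM, Matrix.sub_mulVec, Matrix.one_mulVec, sub_eq_zero]
  obtain ⟨j₀, hj₀⟩ : ∃ j₀, u j₀ ≠ 0 := by
    by_contra h; push_neg at h; exact hu (funext fun i => h i)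
  have hAu : A.mulVec u = u := fix_pow L u hfix s
  have hune : ∀ i, u i ≠ 0 := key A hApos hAcol u hAu hj₀
  set i₀ : Fin κ := ⟨0, hκ⟩ with hi₀
  -- kernel of M is spanned by u
  have hker : ∀ v : Fin κ → ℝ, M.mulVec v = 0 → ∃ c : ℝ, v = c • u := by
    intro v hv
    have hLv : L.mulVec v = v := (hL1 v).mpr hv
    have hAv : A.mulVec v = v := fix_pow L v hLv s
    refine ⟨v i₀ / u i₀, ?_⟩
    by_contra hne
    have hw : A.mulVec (v - (v i₀ / u i₀) • u) = v - (v i₀ / u i₀) • u := by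
      rw [Matrix.mulVec_sub, Matrix.mulVec_smul, hAv, hAu]
    obtain ⟨j₁, hj₁⟩ : ∃ j₁, (v - (v i₀ / u i₀) • u) j₁ ≠ 0 := by
      by_contra h; push_neg at h
      exact hne (by rw [← sub_eq_zero]; exact funext fun i => h i)
    have hall := key A hApos hAcol _ hw hj₁ i₀
    apply hall
    have : (v - (v i₀ / u i₀) • u) i₀ = v i₀ - (v i₀ / u i₀) * u i₀ := rfl
    rw [this, div_mul_cancel₀ _ (hune i₀), sub_self]
  have hMu : M.mulVec u = 0 := (hL1 u).mp hfix
  -- kernel submodule equals span of u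
  have hkerM : LinearMap.ker M.mulVecLin = Submodule.span ℝ {u} := by
    apply le_antisymm
    · intro x hx
      obtain ⟨c, rfl⟩ := hker x (by simpa using hx)
      exact Submodule.smul_mem _ c (Submodule.mem_span_singleton_self u)
    · rw [Submodule.span_singleton_le_iff_mem]
      exact LinearMap.mem_ker.mpr (by simpa using hMu)
  have hkdim : Module.finrank ℝ (LinearMap.ker M.mulVecLin) = 1 := by
    rw [hkerM]; exact finrank_span_singleton hu
  have hrank : M.rank + 1 = κ := by
    have h := LinearMap.finrank_range_add_finrank_ker (M.mulVecLin)
    rw [hkdim] at h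
    simpa [Matrix.rank, Module.finrank_pi] using h
  -- left kernel is spanned by ones
  set ones : Fin κ → ℝ := fun _ => 1 with hones
  have hones0 : ones ≠ 0 := by
    intro h
    have := congrFun h i₀
    simp [hones] at this
  have hMcol0 : ∀ j, ∑ i, M i j = 0 := by
    intro j
    rw [hM]
    simp only [Matrix.sub_apply, Finset.sum_sub_distrib, hcol j, Matrix.one_apply]
    simp
  have honesker : Matrix.vecMul ones M = 0 := by
    funext j
    have : (Matrix.vecMul ones M) j = ∑ i, M i j := by
      simp [Matrix.vecMul, dotProduct, hones]
    rw [this, hMcol0 j]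
    rfl
  have hkerT : Module.finrank ℝ (LinearMap.ker Mᵀ.mulVecLin) = 1 := by
    have h := LinearMap.finrank_range_add_finrank_ker (Mᵀ.mulVecLin)
    have h2 : Mᵀ.rank = M.rank := Matrix.rank_transpose M
    have h3 : Mᵀ.rank + Module.finrank ℝ (LinearMap.ker Mᵀ.mulVecLin) = κ := by
      simpa [Matrix.rank, Module.finrank_pi] using h
    omega
  have hspanT : LinearMap.ker Mᵀ.mulVecLin = Submodule.span ℝ {ones} := by
    symm
    apply Submodule.eq_of_le_of_finrank_le
    · rw [Submodule.span_singleton_le_iff_mem]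
      exact LinearMap.mem_ker.mpr (by simpa using honesker)
    · rw [hkerT, finrank_span_singleton hones0]
  have hleft : ∀ w : Fin κ → ℝ, Matrix.vecMul w M = 0 → ∃ c : ℝ, w = c • ones := by
    intro w hw
    have : w ∈ LinearMap.ker Mᵀ.mulVecLin := LinearMap.mem_ker.mpr (by simpa using hw)
    rw [hspanT, Submodule.mem_span_singleton] at this
    obtain ⟨c, hc⟩ := this
    exact ⟨c, hc.symm⟩
  have husq : 0 < ∑ k, u k * u k := by
    refine Finset.sum_pos (fun k _ => mul_self_pos.mpr (hune k)) ⟨i₀, Finset.mem_univ i₀⟩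
  -- main part, per column j
  intro j
  set N : Matrix (Fin κ) (Fin κ) ℝ := M.updateRow j u with hNdef
  have hdetN : N.det ≠ 0 := by
    rw [Ne, ← Matrix.exists_vecMul_eq_zero_iff]
    rintro ⟨w, hw0, hwN⟩
    -- compute w j = 0
    have hNu : ∀ i, ∑ k, N i k * u k = if i = j then ∑ k, u k * u k else 0 := by
      intro i
      by_cases hij : i = j
      · subst hij
        simp [hNdef, Matrix.updateRow_apply]
      · have : ∀ k, N i k = M i k := fun k => by
          simp [hNdef, Matrix.updateRow_apply, hij]
        simp only [this, hij, if_false]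
        have := congrFun hMu i
        simpa [Matrix.mulVec, dotProduct] using this
    have hdot : ∑ k, (Matrix.vecMul w N) k * u k = 0 := by rw [hwN]; simp
    have hswap : ∑ k, (Matrix.vecMul w N) k * u k
        = ∑ i, w i * (∑ k, N i k * u k) := by
      simp only [Matrix.vecMul, dotProduct, Finset.sum_mul, Finset.mul_sum]
      rw [Finset.sum_comm]
      refine Finset.sum_congr rfl fun i _ => Finset.sum_congr rfl fun k _ => by ring
    have hwj : w j = 0 := by
      have : ∑ i, w i * (∑ k, N i k * u k) = w j * ∑ k, u k * u k := by
        rw [Finset.sum_eq_single j]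
        · rw [hNu j]; simp
        · intro i _ hij; rw [hNu i]; simp [hij]
        · intro h; exact absurd (Finset.mem_univ j) h
      rw [hswap, this] at hdot
      exact (mul_eq_zero.mp hdot).resolve_right (ne_of_gt husq)
    -- then w is in left kernel of M
    have hwM : Matrix.vecMul w M = 0 := by
      funext k
      have h2 : (Matrix.vecMul w N) k = (Matrix.vecMul w M) k := by
        simp only [Matrix.vecMul, dotProduct]
        refine Finset.sum_congr rfl fun i _ => ?_
        by_cases hij : i = j
        · subst hij; rw [hwj]; ring
        · simp [hNdef, Matrix.updateRow_apply, hij]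
      rw [← h2, hwN]
    obtain ⟨c, hc⟩ := hleft w hwM
    have hc0 : c = 0 := by
      have := congrFun hc j
      rw [hwj] at this
      simpa [hones] using this.symm
    exact hw0 (by rw [hc, hc0, zero_smul])
  -- N.det equals the pairing of u with column j of the adjugate
  have hdet_eq : N.det = ∑ i, M.adjugate i j * u i := by
    rw [hNdef, ← Matrix.cramer_transpose_apply, Matrix.cramer_eq_adjugate_mulVec]
    simp only [Matrix.mulVec, dotProduct, ← Matrix.adjugate_transpose,
      Matrix.transpose_apply]
  have hdetM : M.det = 0 := Matrix.exists_mulVec_eq_zero_iff.mp ⟨u, hu, hMu⟩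
  have hcolker : M.mulVec (fun i => M.adjugate i j) = 0 := by
    funext i
    have h := congrFun (congrFun (Matrix.mul_adjugate M) i) j
    rw [hdetM] at h
    have h2 : (M.mulVec (fun i => M.adjugate i j)) i = (M * M.adjugate) i j := by
      simp [Matrix.mulVec, dotProduct, Matrix.mul_apply]
    rw [h2, h]
    simp
  obtain ⟨c, hc⟩ := hker _ hcolker
  refine ⟨c, ?_, hc⟩
  intro hc0
  rw [hc0, zero_smul] at hc
  apply hdetN
  rw [hdet_eq]
  refine Finset.sum_eq_zero fun i _ => ?_
  have := congrFun hc i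
  simp only [Pi.zero_apply] at this
  rw [this, zero_mul]
end
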